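/- (Grabiner–Magyar) Let d ≥ 1 and let λ, μ ∈ ℤ^d be points with λ_1 > λ_2 > … > λ_d > 0 and μ_1 > μ_2 > … > μ_d > 0. For n ≥ 0 let w_n be the number of sequences p_0 = λ, p_1, …, p_n = μ of points of ℤ^d such that each difference p_{m+1} − p_m belongs to {e_1, −e_1, …, e_d, −e_d} and every p_m satisfies (p_m)_1 > (p_m)_2 > … > (p_m)_d > 0. Then the formal power series identity Σ_{n≥0} w_n t^n/n! = det( b_{μ_i − λ_j} − b_{μ_i + λ_j} )_{1≤i,j≤d} holds in ℚ[[t]]. -/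

import Mathlib

/-- The hyperbolic Bessel function `b_j = I_{|j|}(2t) = Σ_{n≥0} t^(2n+|j|)/(n!·(n+|j|)!)`
as a formal power series in `ℚ⟦t⟧`; note `b_{-j} = b_j`. -/
noncomputable def besselB (j : ℤ) : PowerSeries ℚ :=
  PowerSeries.mk fun m =>
    if j.natAbs ≤ m ∧ (m - j.natAbs) % 2 = 0 then
      1 / ((((m - j.natAbs) / 2).factorial : ℚ) *
        (((m - j.natAbs) / 2 + j.natAbs).factorial : ℚ))
    else 0

/-!
Write `F(x)` for the determinant with rows `b_{x_i - λ_j} - b_{x_i + λ_j}`. Since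
`b_j' = b_{j-1} + b_{j+1}`, differentiating `F(x)` row by row gives
`F(x)' = Σ_i (F(x + e_i) + F(x - e_i))`, the recursion satisfied by the walk counts `w_n(x)`
when the last step is removed. A walk that leaves the chamber in one step lands on a wall
`x_i = x_j` or `x_i = 0`, where `F` vanishes (two equal rows, or a zero row as `b_{-j} = b_j`);
and on the chamber the constant term of `F(x)` is `[x = λ]`. So `n! [t^n] F(μ)` and `w_n(μ)`
satisfy the same recursion with the same initial values.
-/

open PowerSeries Nat Matrix Finset

lemma Derivation.map_finsetProd {R A M ι : Type*} [CommSemiring R] [CommSemiring A] [Algebra R A]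
    [AddCommMonoid M] [Module A M] [Module R M] [DecidableEq ι]
    (D : Derivation R A M) (s : Finset ι) (f : ι → A) :
    D (∏ i ∈ s, f i) = ∑ i ∈ s, (∏ j ∈ s.erase i, f j) • D (f i) := by
  induction s using Finset.induction with
  | empty => simp
  | @insert a s ha ih =>
    rw [prod_insert ha, D.leibniz, ih, sum_insert ha, erase_insert ha, smul_sum, add_comm]
    congr 1
    refine sum_congr rfl fun i hi => ?_
    rw [erase_insert_of_ne (ne_of_mem_of_not_mem hi ha).symm, prod_insert (by simp [ha]),
      smul_smul]

lemma Derivation.map_det {R A n : Type*} [CommSemiring R] [CommRing A] [Algebra R A] [Fintype n]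
    [DecidableEq n] (D : Derivation R A A) (M : Matrix n n A) :
    D M.det = ∑ i, (M.updateCol i fun k => D (M k i)).det := by
  simp only [det_apply, map_sum, Units.smul_def, map_zsmul, D.map_finsetProd, smul_sum]
  rw [sum_comm]
  refine sum_congr rfl fun i _ => sum_congr rfl fun σ _ => ?_
  rw [← mul_prod_erase univ _ (mem_univ i), updateCol_self, smul_eq_mul, mul_comm]
  congr 2
  exact prod_congr rfl fun j hj => by rw [updateCol_ne (ne_of_mem_erase hj)]

namespace GrabinerMagyar

section Walks

variable {G : Type*} [AddCommGroup G] (S : Finset G) (C : Set G)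

def walks (n : ℕ) (a b : G) : Set (Fin (n + 1) → G) :=
  {p | p 0 = a ∧ p (Fin.last n) = b ∧ (∀ m : Fin n, p m.succ - p m.castSucc ∈ S) ∧ ∀ m, p m ∈ C}

variable {S C}

instance (n : ℕ) (a b : G) : Finite (walks S C n a b) := by
  refine Finite.of_injective (β := Fin n → S)
    (fun p m => ⟨p.1 m.succ - p.1 m.castSucc, p.2.2.2.1 m⟩) fun p q h => Subtype.ext ?_
  funext m
  induction m using Fin.induction with
  | zero => rw [p.2.1, q.2.1]
  | succ m ih => simpa [ih] using congrArg Subtype.val (congrFun h m)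

lemma card_walks_of_notMem {n : ℕ} {a b : G} (hb : b ∉ C) : Nat.card (walks S C n a b) = 0 :=
  have : IsEmpty (walks S C n a b) := ⟨fun p => hb (p.2.2.1 ▸ p.2.2.2.2 (Fin.last n))⟩
  Nat.card_of_isEmpty

lemma card_walks_zero [DecidableEq G] {a b : G} (hb : b ∈ C) :
    Nat.card (walks S C 0 a b) = if a = b then 1 else 0 := by
  split_ifs with h
  · subst h
    refine Nat.card_eq_one_iff_exists.mpr ⟨⟨fun _ => a, rfl, rfl, Fin.elim0, fun _ => hb⟩,
      fun p => Subtype.ext (funext fun m => ?_)⟩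
    rw [Fin.fin_one_eq_zero m, p.2.1]
  · have : IsEmpty (walks S C 0 a b) := ⟨fun p => h (p.2.1.symm.trans p.2.2.1)⟩
    exact Nat.card_of_isEmpty

def walksSuccEquiv (n : ℕ) (a : G) {b : G} (hb : b ∈ C) :
    walks S C (n + 1) a b ≃ Σ s : S, walks S C n a (b - s) where
  toFun p := ⟨⟨b - p.1 (Fin.last n).castSucc, by
      simpa [p.2.2.1] using p.2.2.2.1 (Fin.last n)⟩,
    ⟨Fin.init p.1, p.2.1, by simp [Fin.init], fun m => p.2.2.2.1 m.castSucc,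
      fun m => p.2.2.2.2 m.castSucc⟩⟩
  invFun q := ⟨Fin.snoc q.2.1 b, by
    obtain ⟨⟨s, hs⟩, p, hp0, hpn, hpS, hpC⟩ := q
    refine ⟨by simpa using hp0, by simp, fun m => ?_, fun m => ?_⟩
    · induction m using Fin.lastCases with
      | last => simpa [hpn] using hs
      | cast m =>
        rw [Fin.succ_castSucc, Fin.snoc_castSucc, Fin.snoc_castSucc]
        exact hpS m
    · induction m using Fin.lastCases with
      | last => simpa using hb
      | cast m => simpa using hpC m⟩
  left_inv p := Subtype.ext <| by
    conv_rhs => rw [← Fin.snoc_init_self p.1]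
    rw [p.2.2.1]
  right_inv q := by
    obtain ⟨⟨s, -⟩, p, -, hpn, -, -⟩ := q
    refine Sigma.subtype_ext (Subtype.ext ?_) ?_
    · simp [hpn]
    · simp

lemma card_walks_succ (n : ℕ) (a : G) {b : G} (hb : b ∈ C) :
    Nat.card (walks S C (n + 1) a b) = ∑ s ∈ S, Nat.card (walks S C n a (b - s)) := by
  rw [Nat.card_congr (walksSuccEquiv n a hb), Nat.card_sigma,
    sum_coe_sort S fun s => Nat.card (walks S C n a (b - s))]

theorem mk_card_walks_div_factorial [DecidableEq G] {f : G → ℚ⟦X⟧} {a : G}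
    (hf₀ : ∀ b ∈ C, constantCoeff (f b) = if a = b then 1 else 0)
    (hf' : ∀ b ∈ C, derivative ℚ (f b) = ∑ s ∈ S, f (b - s))
    (hf_wall : ∀ b ∈ C, ∀ s ∈ S, b - s ∉ C → f (b - s) = 0) {b : G} (hb : b ∈ C) :
    PowerSeries.mk (fun n => (Nat.card (walks S C n a b) : ℚ) / n !) = f b := by
  ext n
  rw [coeff_mk, div_eq_iff (by positivity)]
  induction n generalizing b with
  | zero => simp [card_walks_zero hb, hf₀ b hb]
  | succ n ih =>
    have hterm (s) (hs : s ∈ S) :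
        (Nat.card (walks S C n a (b - s)) : ℚ) = coeff n (f (b - s)) * n ! := by
      by_cases hbs : b - s ∈ C
      · exact ih hbs
      · simp [card_walks_of_notMem hbs, hf_wall b hb s hs hbs]
    calc (Nat.card (walks S C (n + 1) a b) : ℚ)
        = ∑ s ∈ S, coeff n (f (b - s)) * n ! := by
          rw [card_walks_succ n a hb]
          push_cast
          exact sum_congr rfl hterm
      _ = coeff n (derivative ℚ (f b)) * n ! := by rw [hf' b hb, map_sum, sum_mul]
      _ = coeff (n + 1) (f b) * (n + 1)! := by
          rw [coeff_derivative, factorial_succ]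
          push_cast
          ring

end Walks

section Bessel

noncomputable def besselCoeff (a m : ℕ) : ℚ :=
  if a ≤ m ∧ (m - a) % 2 = 0 then 1 / (((m - a) / 2)! * ((m - a) / 2 + a)! : ℚ) else 0

lemma coeff_besselB (j : ℤ) (m : ℕ) : coeff m (besselB j) = besselCoeff j.natAbs m := by
  simp [besselB, besselCoeff]

lemma constantCoeff_besselB (j : ℤ) : constantCoeff (besselB j) = if j = 0 then 1 else 0 := by
  rw [← coeff_zero_eq_constantCoeff_apply, besselB, coeff_mk]
  split_ifs <;> simp_all

lemma besselB_neg (j : ℤ) : besselB (-j) = besselB j := by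
  simp [besselB]

lemma besselCoeff_add_two_mul (a n : ℕ) :
    besselCoeff a (a + 2 * n) = 1 / (n ! * (n + a)! : ℚ) := by
  rw [besselCoeff, if_pos (by omega), show (a + 2 * n - a) / 2 = n by omega]

lemma besselCoeff_eq_zero {a m : ℕ} (h : ∀ n, m ≠ a + 2 * n) : besselCoeff a m = 0 :=
  if_neg fun ⟨h₁, h₂⟩ => h ((m - a) / 2) (by omega)

lemma besselCoeff_succ_mul (a m : ℕ) :
    besselCoeff (a + 1) (m + 1) * (m + 1) = besselCoeff a m + besselCoeff (a + 2) m := by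
  by_cases hm : ∃ n, m = a + 2 * n
  · obtain ⟨n, rfl⟩ := hm
    rw [show a + 2 * n + 1 = a + 1 + 2 * n by ring, besselCoeff_add_two_mul,
      besselCoeff_add_two_mul]
    rcases n with _ | n
    · rw [besselCoeff_eq_zero (by omega)]
      simp only [factorial_zero, zero_add, mul_zero, add_zero, factorial_succ]
      push_cast
      field_simp
    · rw [show a + 2 * (n + 1) = a + 2 + 2 * n by ring, besselCoeff_add_two_mul,
        show n + 1 + (a + 1) = n + (a + 2) by ring, show n + (a + 2) = (n + 1 + a) + 1 by ring,
        factorial_succ (n + 1 + a), factorial_succ n]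
      push_cast
      field_simp
      ring
  · push Not at hm
    rw [besselCoeff_eq_zero fun n => by have := hm n; omega, besselCoeff_eq_zero hm,
      besselCoeff_eq_zero fun n => by have := hm (n + 1); omega]
    ring

lemma besselCoeff_zero_succ_mul (m : ℕ) :
    besselCoeff 0 (m + 1) * (m + 1) = 2 * besselCoeff 1 m := by
  by_cases hm : ∃ n, m = 1 + 2 * n
  · obtain ⟨n, rfl⟩ := hm
    rw [show 1 + 2 * n + 1 = 0 + 2 * (n + 1) by ring, besselCoeff_add_two_mul,
      besselCoeff_add_two_mul, factorial_succ n]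
    push_cast
    field_simp
    ring
  · push Not at hm
    rw [besselCoeff_eq_zero fun n => by have := hm (n - 1); omega, besselCoeff_eq_zero hm]
    ring

lemma derivative_besselB_natCast (a : ℕ) :
    derivative ℚ (besselB a) = besselB (a - 1) + besselB (a + 1) := by
  ext m
  rw [coeff_derivative, map_add]
  simp only [coeff_besselB]
  rcases a with _ | a
  · simp [besselCoeff_zero_succ_mul, two_mul]
  · push_cast
    simp only [add_sub_cancel_right, Int.natAbs_natCast,
      show (a : ℤ) + 1 + 1 = (a + 2 : ℕ) by push_cast; ring]
    rw [show ((a : ℤ) + 1).natAbs = a + 1 by omega, besselCoeff_succ_mul]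

lemma derivative_besselB (j : ℤ) :
    derivative ℚ (besselB j) = besselB (j - 1) + besselB (j + 1) := by
  rcases Int.natAbs_eq j with h | h <;> rw [h]
  · exact derivative_besselB_natCast _
  · rw [besselB_neg, derivative_besselB_natCast, add_comm, ← besselB_neg (_ + 1),
      ← besselB_neg (_ - 1)]
    ring_nf

end Bessel

section Chamber

variable {d : ℕ}

def chamber (d : ℕ) : Set (Fin d → ℤ) := {x | StrictAnti x ∧ ∀ i, 0 < x i}

def unitSteps (d : ℕ) : Finset (Fin d → ℤ) :=
  univ.image (fun i => Pi.single i 1) ∪ univ.image (fun i => -Pi.single i 1)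

lemma mem_unitSteps {s : Fin d → ℤ} :
    s ∈ unitSteps d ↔ ∃ i, s = Pi.single i 1 ∨ s = -Pi.single i 1 := by
  simp [unitSteps, exists_or, eq_comm]

lemma sum_unitSteps {M : Type*} [AddCommMonoid M] (f : (Fin d → ℤ) → M) :
    ∑ s ∈ unitSteps d, f s = ∑ i, (f (Pi.single i 1) + f (-Pi.single i 1)) := by
  have hinj : Function.Injective fun i : Fin d => (Pi.single i 1 : Fin d → ℤ) :=
    fun i j h => by simpa [Pi.single_apply] using congrFun h i
  have hinj' : Function.Injective fun i : Fin d => -(Pi.single i 1 : Fin d → ℤ) :=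
    fun i j h => hinj (neg_injective h)
  rw [unitSteps, sum_union, sum_image hinj.injOn, sum_image hinj'.injOn, sum_add_distrib]
  simp only [disjoint_left, mem_image, mem_univ, true_and]
  rintro _ ⟨i, rfl⟩ ⟨j, hj⟩
  have := congrFun hj i
  simp only [Pi.neg_apply, Pi.single_apply, if_true] at this
  split_ifs at this
  omega

lemma unitSteps_apply_le {s : Fin d → ℤ} (hs : s ∈ unitSteps d) (i j : Fin d) :
    s i ≤ s j + 1 ∧ s i ≤ 1 := by
  obtain ⟨k, rfl | rfl⟩ := mem_unitSteps.mp hs <;> simp only [Pi.single_apply, Pi.neg_apply] <;>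
    split_ifs <;> omega

lemma antitone_sub_of_mem_chamber {x s : Fin d → ℤ} (hx : x ∈ chamber d)
    (hs : ∀ i j, s i ≤ s j + 1) : Antitone (x - s) := by
  intro i j hij
  rcases hij.lt_or_eq with h | rfl
  · have := hx.1 h
    have := hs i j
    simp only [Pi.sub_apply]
    omega
  · exact le_rfl

end Chamber

section BesselDet

variable {d : ℕ}

noncomputable def besselRow (lam : Fin d → ℤ) (x : ℤ) (j : Fin d) : ℚ⟦X⟧ :=
  besselB (x - lam j) - besselB (x + lam j)

noncomputable def besselDet (lam x : Fin d → ℤ) : ℚ⟦X⟧ :=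
  (of fun i j => besselRow lam (x i) j).det

lemma constantCoeff_besselDet {lam x : Fin d → ℤ} (hlam : lam ∈ chamber d) (hx : x ∈ chamber d) :
    constantCoeff (besselDet lam x) = if lam = x then 1 else 0 := by
  have hentry (i j) : constantCoeff (besselRow lam (x i) j) = if x i = lam j then 1 else 0 := by
    have := hx.2 i
    have := hlam.2 j
    simp [besselRow, constantCoeff_besselB, sub_eq_zero, show x i + lam j ≠ 0 by omega]
  rw [besselDet, RingHom.map_det, RingHom.mapMatrix_apply]
  split_ifs with h
  · subst h
    rw [show (of fun i j => besselRow lam (lam i) j).map constantCoeff = 1 from ?_, det_one]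
    ext i j
    simp [hentry, one_apply, hlam.1.injective.eq_iff]
  · rw [det_apply]
    refine sum_eq_zero fun σ _ => ?_
    obtain ⟨i, hi⟩ : ∃ i, x (σ i) ≠ lam i := by
      by_contra! hσ
      refine h ((hlam.1.range_inj hx.1).mp ?_)
      rw [← σ.surjective.range_comp x]
      exact congrArg Set.range (funext hσ).symm
    rw [prod_eq_zero (mem_univ i) (by simp [hentry, hi]), smul_zero]

lemma derivative_besselRow (lam : Fin d → ℤ) (x : ℤ) (j : Fin d) :
    derivative ℚ (besselRow lam x j) = besselRow lam (x + -1) j + besselRow lam (x + 1) j := by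
  simp only [besselRow, map_sub, derivative_besselB]
  ring_nf

lemma updateRow_besselRow (lam x : Fin d → ℤ) (i : Fin d) (a : ℤ) :
    (of fun k j => besselRow lam (x k) j).updateRow i (besselRow lam (x i + a)) =
      of fun k j => besselRow lam ((x + Pi.single i a : Fin d → ℤ) k) j := by
  refine Matrix.ext fun k j => ?_
  rcases eq_or_ne k i with rfl | hk <;> simp [updateRow_apply, *]

lemma derivative_besselDet (lam x : Fin d → ℤ) :
    derivative ℚ (besselDet lam x) = ∑ s ∈ unitSteps d, besselDet lam (x - s) := by
  rw [sum_unitSteps, besselDet, ← det_transpose, Derivation.map_det]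
  refine sum_congr rfl fun i _ => ?_
  simp only [transpose_apply, of_apply, derivative_besselRow, updateCol_transpose]
  rw [det_transpose, show (fun k => besselRow lam (x i + -1) k + besselRow lam (x i + 1) k) =
    besselRow lam (x i + -1) + besselRow lam (x i + 1) from rfl, det_updateRow_add,
    updateRow_besselRow, updateRow_besselRow, Pi.single_neg, sub_neg_eq_add, ← sub_eq_add_neg]
  rfl

lemma besselDet_eq_zero_of_eq (lam : Fin d → ℤ) {x : Fin d → ℤ} {i j : Fin d} (hij : i ≠ j)
    (h : x i = x j) : besselDet lam x = 0 :=
  det_zero_of_row_eq hij (congrArg (besselRow lam) h)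

lemma besselDet_eq_zero_of_eq_zero (lam : Fin d → ℤ) {x : Fin d → ℤ} {i : Fin d} (h : x i = 0) :
    besselDet lam x = 0 :=
  det_eq_zero_of_row_eq_zero i fun j => by simp [besselRow, h, besselB_neg]

lemma besselDet_eq_zero_of_antitone (lam : Fin d → ℤ) {x : Fin d → ℤ} (hx : Antitone x)
    (hx₀ : ∀ i, 0 ≤ x i) (hxC : x ∉ chamber d) : besselDet lam x = 0 := by
  by_cases hinj : Function.Injective x
  · obtain ⟨i, hi⟩ : ∃ i, x i ≤ 0 := by
      by_contra! h
      exact hxC ⟨hx.strictAnti_of_injective hinj, h⟩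
    exact besselDet_eq_zero_of_eq_zero lam (le_antisymm hi (hx₀ i))
  · obtain ⟨i, j, h, hij⟩ := Function.not_injective_iff.mp hinj
    exact besselDet_eq_zero_of_eq lam hij h

lemma besselDet_sub_eq_zero (lam : Fin d → ℤ) {x s : Fin d → ℤ} (hx : x ∈ chamber d)
    (hs : s ∈ unitSteps d) (hxs : x - s ∉ chamber d) : besselDet lam (x - s) = 0 := by
  refine besselDet_eq_zero_of_antitone lam
    (antitone_sub_of_mem_chamber hx fun i j => (unitSteps_apply_le hs i j).1) (fun i => ?_) hxs
  have := hx.2 i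
  have := (unitSteps_apply_le hs i i).2
  simp only [Pi.sub_apply]
  omega

end BesselDet

end GrabinerMagyar

open GrabinerMagyar

theorem grabiner_magyar_general (d : ℕ) (lam mu : Fin d → ℤ)
    (hlam : StrictAnti lam) (hlam0 : ∀ i, 0 < lam i)
    (hmu : StrictAnti mu) (hmu0 : ∀ i, 0 < mu i) :
    PowerSeries.mk (fun n =>
      (Nat.card {p : Fin (n + 1) → Fin d → ℤ //
        p 0 = lam ∧ p (Fin.last n) = mu ∧
        (∀ m : Fin n, ∃ i : Fin d,
          p m.succ - p m.castSucc = Pi.single i 1 ∨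
          p m.succ - p m.castSucc = -Pi.single i 1) ∧
        ∀ m : Fin (n + 1), StrictAnti (p m) ∧ ∀ i : Fin d, 0 < p m i} : ℚ) /
        n.factorial) =
      Matrix.det (Matrix.of fun i j : Fin d =>
        besselB (mu i - lam j) - besselB (mu i + lam j)) := by
  have hwalks := mk_card_walks_div_factorial (S := unitSteps d) (f := besselDet lam)
    (fun x hx => constantCoeff_besselDet ⟨hlam, hlam0⟩ hx)
    (fun x _ => derivative_besselDet lam x) (fun x hx s hs => besselDet_sub_eq_zero lam hx hs)
    (b := mu) ⟨hmu, hmu0⟩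
  refine Eq.trans ?_ hwalks
  congr! with n p
  simp [walks, mem_unitSteps, chamber]

/-- Grabiner–Magyar: the exponential generating function of simple walks from `λ` to `μ`
staying in the strict chamber `x_1 > x_2 > … > x_d > 0` equals
`det(b_{μ_i−λ_j} − b_{μ_i+λ_j})_{1≤i,j≤d}`. -/
theorem grabiner_magyar (d : ℕ) (hd : 1 ≤ d) (lam mu : Fin d → ℤ)
    (hlam : StrictAnti lam) (hlam0 : ∀ i, 0 < lam i)
    (hmu : StrictAnti mu) (hmu0 : ∀ i, 0 < mu i) :
    PowerSeries.mk (fun n =>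
      (Nat.card {p : Fin (n + 1) → Fin d → ℤ //
        p 0 = lam ∧ p (Fin.last n) = mu ∧
        (∀ m : Fin n, ∃ i : Fin d,
          p m.succ - p m.castSucc = Pi.single i 1 ∨
          p m.succ - p m.castSucc = -Pi.single i 1) ∧
        ∀ m : Fin (n + 1), StrictAnti (p m) ∧ ∀ i : Fin d, 0 < p m i} : ℚ) /
        n.factorial) =
      Matrix.det (Matrix.of fun i j : Fin d =>
        besselB (mu i - lam j) - besselB (mu i + lam j)) :=
  grabiner_magyar_general d lam mu hlam hlam0 hmu hmu0
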